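/- Let E = E({c_n}) ⊂ ℝ be the self-similar-type set generated from E₀ = {0,1} by the recursion E_n = E_{n−1} ∪ E¹_{n−1} ∪ E²_{n−1} (E¹_{n−1} a copy of E_{n−1} contracted by factor c_n appended at the right end, E²_{n−1} an uncontracted translate appended after), with c_n = 1 − 1/(2n). Let Q_n be the smallest interval containing E_n and X_{Q_n}(ω) the length of the connected component of Q_n° \ E containing ω, viewed as a random variable under normalized Lebesgue measure on Q_n. Then E[X_{Q_n}] · E[X_{Q_n}^{-1}] = ∏_{i=1}^{n} 3(2 + c_i²)/(2 + c_i)², and this product is bounded uniformly in n by e^{π²/75}. -/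

import Mathlib

/-!
Write `rₙ` for the right endpoint of `Qₙ = [0, rₙ]`. On `Qₙ` the set `E` agrees with `Eₙ`, and on
`Qₙ₊₁` it consists of three affine copies `y ↦ a + b y` of `Eₙ`, with slopes `1, cₙ₊₁, 1`, that
meet only at their endpoints. A copy with slope `b` therefore carries the gaps of `Eₙ` to gaps
`b` times as long, so `X_{Qₙ₊₁}(a + b y) = b X_{Qₙ}(y)`. Changing variables on each copy gives
`∫_{Qₙ₊₁} X^θ = (2 + cₙ₊₁^{1+θ}) ∫_{Qₙ} X^θ`, and `rₙ₊₁ = (2 + cₙ₊₁) rₙ`. The cases `θ = 1` and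
`θ = -1` give the product formula. For `cᵢ = 1 - 1/(2i)` the `i`-th factor equals
`1 + 2/(6i - 1)² ≤ exp (2/(25 i²))`, and `∑ 1/i² ≤ π²/6`.
-/

open MeasureTheory Set
open scoped Classical Real

/-- One step of the construction: given the current finite stage `(S, r)` (a set with
right endpoint `r` starting at `0`), append a copy contracted by `c` and then an
uncontracted translated copy. -/
noncomputable def EfinStep (c : ℝ) (p : Set ℝ × ℝ) : Set ℝ × ℝ :=
  (p.1 ∪ (fun x => p.2 + c * x) '' p.1 ∪ (fun x => p.2 * (1 + c) + x) '' p.1,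
    p.2 * (2 + c))

/-- The finite stages `(Eₙ, rₙ)` of the construction of `E⁺({cₙ})`, starting from
`E₀ = {0,1}` with right endpoint `r₀ = 1`. -/
noncomputable def Efin (c : ℕ → ℝ) : ℕ → Set ℝ × ℝ
  | 0 => ({0, 1}, 1)
  | n + 1 => EfinStep (c (n + 1)) (Efin c n)

/-- `E⁺({cₙ}) = ⋃ₙ Eₙ`. -/
noncomputable def Eplus (c : ℕ → ℝ) : Set ℝ := ⋃ n, (Efin c n).1

/-- `E({cₙ}) = E⁻ ∪ E⁺` where `E⁻` is the reflection of `E⁺` through the origin. -/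
noncomputable def Eset (c : ℕ → ℝ) : Set ℝ :=
  (fun x : ℝ => -x) '' Eplus c ∪ Eplus c

/-- `Qₙ`, the smallest interval containing `Eₙ`, namely `[0, rₙ]`. -/
noncomputable def Qn (c : ℕ → ℝ) (n : ℕ) : Set ℝ := Set.Icc 0 (Efin c n).2

/-- `X_{Qₙ}(ω)`: the length of the connected component of `Qₙ° \ E` containing `ω`
(zero when `ω` belongs to no such component). -/
noncomputable def Xn (c : ℕ → ℝ) (n : ℕ) (ω : ℝ) : ℝ :=
  (volume (connectedComponentIn (interior (Qn c n) \ Eset c) ω)).toReal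

/-- The particular sequence of contractions `cₙ = 1 − 1/(2n)`. -/
noncomputable def cseq : ℕ → ℝ := fun n => 1 - 1 / (2 * n)

section Construction

variable {c : ℕ → ℝ}

lemma Efin_succ_fst (n : ℕ) :
    (Efin c (n + 1)).1 = (Efin c n).1 ∪ (fun x => (Efin c n).2 + c (n + 1) * x) '' (Efin c n).1 ∪
      (fun x => (Efin c n).2 * (1 + c (n + 1)) + x) '' (Efin c n).1 := rfl

lemma Efin_succ_snd (n : ℕ) : (Efin c (n + 1)).2 = (Efin c n).2 * (2 + c (n + 1)) := rfl

lemma Efin_snd_eq_prod (n : ℕ) : (Efin c n).2 = ∏ i ∈ Finset.Icc 1 n, (2 + c i) := by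
  induction n with
  | zero => rfl
  | succ n ih => rw [Efin_succ_snd, ih, Finset.prod_Icc_succ_top (Nat.le_add_left 1 n)]

lemma Efin_snd_pos (hc : ∀ n, 0 < c n) (n : ℕ) : 0 < (Efin c n).2 := by
  rw [Efin_snd_eq_prod]
  exact Finset.prod_pos fun i _ => by linarith [hc i]

lemma Efin_snd_mono (hc : ∀ n, 0 < c n) : Monotone fun n => (Efin c n).2 := by
  refine monotone_nat_of_le_succ fun n => ?_
  have := Efin_snd_pos hc n
  simp only [Efin_succ_snd]
  nlinarith [hc (n + 1)]

lemma Efin_fst_mono : Monotone fun n => (Efin c n).1 :=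
  monotone_nat_of_le_succ fun _ _ hx => Or.inl (Or.inl hx)

lemma zero_mem_Efin (n : ℕ) : (0 : ℝ) ∈ (Efin c n).1 :=
  Efin_fst_mono (Nat.zero_le n) (by simp [Efin])

lemma Efin_snd_mem (n : ℕ) : (Efin c n).2 ∈ (Efin c n).1 := by
  cases n with
  | zero => simp [Efin]
  | succ n => exact Or.inr ⟨(Efin c n).2, Efin_snd_mem n, by rw [Efin_succ_snd]; ring⟩

lemma Efin_fst_subset_Icc (hc : ∀ n, 0 < c n) (n : ℕ) :
    (Efin c n).1 ⊆ Icc 0 (Efin c n).2 := by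
  induction n with
  | zero => simp [Efin, pair_subset_iff]
  | succ n ih =>
    have hr := Efin_snd_pos hc n
    have hcn := hc (n + 1)
    rw [Efin_succ_fst, Efin_succ_snd]
    rintro x ((hx | ⟨y, hy, rfl⟩) | ⟨y, hy, rfl⟩)
    · exact ⟨(ih hx).1, by nlinarith [(ih hx).2]⟩
    all_goals exact ⟨by nlinarith [(ih hy).1], by nlinarith [(ih hy).2]⟩

lemma Efin_succ_inter_Icc (hc : ∀ n, 0 < c n) (n : ℕ) :
    (Efin c (n + 1)).1 ∩ Icc 0 (Efin c n).2 ⊆ (Efin c n).1 := by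
  have hr := Efin_snd_pos hc n
  have hcn := hc (n + 1)
  rw [Efin_succ_fst]
  rintro x ⟨(hx | ⟨y, hy, hyx⟩) | ⟨y, hy, hyx⟩, hxr⟩
  · exact hx
  all_goals
    have hy0 := (Efin_fst_subset_Icc hc n hy).1
    obtain rfl : x = (Efin c n).2 := le_antisymm hxr.2 (by rw [← hyx]; nlinarith)
    exact Efin_snd_mem n

lemma Efin_inter_Icc_subset (hc : ∀ n, 0 < c n) {m n : ℕ} (hnm : n ≤ m) :
    (Efin c m).1 ∩ Icc 0 (Efin c n).2 ⊆ (Efin c n).1 := by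
  induction m, hnm using Nat.le_induction with
  | base => exact inter_subset_left
  | succ m hnm ih =>
    rintro x ⟨hx, hxn⟩
    have hxm : x ∈ Icc 0 (Efin c m).2 := ⟨hxn.1, hxn.2.trans (Efin_snd_mono hc hnm)⟩
    exact ih ⟨Efin_succ_inter_Icc hc m ⟨hx, hxm⟩, hxn⟩

lemma Eset_inter_Icc (hc : ∀ n, 0 < c n) (n : ℕ) :
    Eset c ∩ Icc 0 (Efin c n).2 = (Efin c n).1 := by
  refine Subset.antisymm ?_ fun x hx => ⟨Or.inr (mem_iUnion.2 ⟨n, hx⟩), Efin_fst_subset_Icc hc n hx⟩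
  rintro x ⟨⟨y, hy, hyx⟩ | hx, hxn⟩
  · obtain ⟨m, hm⟩ := mem_iUnion.1 hy
    have hy0 := (Efin_fst_subset_Icc hc m hm).1
    have hyx : -y = x := hyx
    obtain rfl : x = 0 := by linarith [hxn.1]
    exact zero_mem_Efin n
  · obtain ⟨m, hm⟩ := mem_iUnion.1 hx
    exact Efin_inter_Icc_subset hc (le_max_right m n)
      ⟨Efin_fst_mono (le_max_left m n) hm, hxn⟩

end Construction

lemma connectedComponentIn_inter_Ioo {U : Set ℝ} {a b x : ℝ} (hx : x ∈ Ioo a b) (ha : a ∉ U)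
    (hb : b ∉ U) : connectedComponentIn (U ∩ Ioo a b) x = connectedComponentIn U x := by
  by_cases hxU : x ∈ U
  · refine (connectedComponentIn_mono x inter_subset_left).antisymm ?_
    have hxC := mem_connectedComponentIn hxU
    have hC : OrdConnected (connectedComponentIn U x) :=
      isPreconnected_connectedComponentIn.ordConnected
    refine isPreconnected_connectedComponentIn.subset_connectedComponentIn hxC
      (subset_inter (connectedComponentIn_subset U x) fun z hz => ⟨?_, ?_⟩)
    · by_contra! hza
      exact ha (connectedComponentIn_subset U x (hC.out hz hxC ⟨hza, hx.1.le⟩))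
    · by_contra! hzb
      exact hb (connectedComponentIn_subset U x (hC.out hxC hz ⟨hx.2.le, hzb⟩))
  · rw [connectedComponentIn_eq_empty hxU, connectedComponentIn_eq_empty fun h => hxU h.1]

lemma Homeomorph.image_connectedComponentIn' {X Y : Type*} [TopologicalSpace X]
    [TopologicalSpace Y] (h : X ≃ₜ Y) (s : Set X) (x : X) :
    h '' connectedComponentIn s x = connectedComponentIn (h '' s) (h x) := by
  by_cases hx : x ∈ s
  · exact h.image_connectedComponentIn hx
  · rw [connectedComponentIn_eq_empty hx, connectedComponentIn_eq_empty, image_empty]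
    rwa [h.injective.mem_set_image]

open scoped Pointwise in
lemma Real.volume_image_affine (a : ℝ) {b : ℝ} (hb : 0 < b) (s : Set ℝ) :
    volume ((fun y => a + b * y) '' s) = ENNReal.ofReal b * volume s := by
  have : (fun y => a + b * y) '' s = (a + ·) '' (b • s) := by
    rw [← image_smul, image_image]; rfl
  rw [this, image_add_left, measure_preimage_add, Measure.addHaar_smul_of_nonneg _ hb.le]
  simp

/-- As `a, a + b r ∉ U`, the component of `U` through `a + b y` stays inside `(a, a + b r)`, where
`U` is the image of `V` under the affine homeomorphism `y ↦ a + b y`. -/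
lemma volume_connectedComponentIn_affine {U V : Set ℝ} {a b r : ℝ} (hb : 0 < b)
    (hV : V ⊆ Ioo 0 r) (ha : a ∉ U) (har : a + b * r ∉ U)
    (hUV : ∀ y ∈ Ioo 0 r, a + b * y ∈ U ↔ y ∈ V) {y : ℝ} (hy : y ∈ Ioo 0 r) :
    volume (connectedComponentIn U (a + b * y)) =
      ENNReal.ofReal b * volume (connectedComponentIn V y) := by
  let f : ℝ ≃ₜ ℝ := (Homeomorph.mulLeft₀ b hb.ne').trans (Homeomorph.addLeft a)
  have hf : ⇑f = fun y => a + b * y := rfl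
  have hU : U ∩ Ioo a (a + b * r) = f '' V := by
    ext x
    rw [hf]
    constructor
    · rintro ⟨hxU, hx⟩
      have hxy : a + b * ((x - a) / b) = x := by field_simp; ring
      have hy : (x - a) / b ∈ Ioo 0 r :=
        ⟨div_pos (by linarith [hx.1]) hb, (div_lt_iff₀ hb).2 (by linarith [hx.2])⟩
      exact ⟨_, (hUV _ hy).1 (by rwa [hxy]), hxy⟩
    · rintro ⟨y, hyV, rfl⟩
      have hy := hV hyV
      exact ⟨(hUV y hy).2 hyV, by nlinarith [hy.1], by nlinarith [hy.2]⟩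
  have hmem : a + b * y ∈ Ioo a (a + b * r) := ⟨by nlinarith [hy.1], by nlinarith [hy.2]⟩
  rw [← connectedComponentIn_inter_Ioo hmem ha har, hU, show a + b * y = f y from rfl,
    ← f.image_connectedComponentIn', hf, Real.volume_image_affine a hb]

section Gaps

variable {c : ℕ → ℝ}

def openGaps (c : ℕ → ℝ) (n : ℕ) : Set ℝ := interior (Qn c n) \ Eset c

lemma openGaps_subset_Ioo (n : ℕ) : openGaps c n ⊆ Ioo 0 (Efin c n).2 := fun _ hx => by
  simpa only [Qn, interior_Icc] using hx.1

lemma notMem_openGaps_of_mem_Efin {n : ℕ} {x : ℝ} (hx : x ∈ (Efin c n).1) : x ∉ openGaps c n :=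
  fun h => h.2 (Or.inr (mem_iUnion.2 ⟨n, hx⟩))

lemma mem_openGaps_iff (hc : ∀ n, 0 < c n) {n : ℕ} {x : ℝ} :
    x ∈ openGaps c n ↔ x ∈ Ioo 0 (Efin c n).2 ∧ x ∉ (Efin c n).1 := by
  rw [openGaps, Qn, interior_Icc, mem_sdiff, ← Eset_inter_Icc hc n, mem_inter_iff,
    and_congr_right_iff]
  exact fun hx => by simp [Ioo_subset_Icc_self hx]

/-- `y ↦ a + b * y` carries `Eₙ ∩ (0, rₙ)` onto the part of `Eₙ₊₁` strictly between two of
its points. -/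
structure IsAffineBlock (c : ℕ → ℝ) (n : ℕ) (a b : ℝ) : Prop where
  slope_pos : 0 < b
  left_mem : a ∈ (Efin c (n + 1)).1
  right_mem : a + b * (Efin c n).2 ∈ (Efin c (n + 1)).1
  Ioo_subset : Ioo a (a + b * (Efin c n).2) ⊆ Ioo 0 (Efin c (n + 1)).2
  mem_iff : ∀ y ∈ Ioo 0 (Efin c n).2, a + b * y ∈ (Efin c (n + 1)).1 ↔ y ∈ (Efin c n).1

lemma isAffineBlock_left (hc : ∀ n, 0 < c n) (n : ℕ) : IsAffineBlock c n 0 1 where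
  slope_pos := one_pos
  left_mem := zero_mem_Efin (n + 1)
  right_mem := by simpa using Efin_fst_mono n.le_succ (Efin_snd_mem n)
  Ioo_subset := by
    have := Efin_snd_mono hc n.le_succ
    exact Ioo_subset_Ioo le_rfl (by simpa using this)
  mem_iff y hy := by
    have hr := Efin_snd_pos hc n
    have hcn := hc (n + 1)
    rw [zero_add, one_mul, Efin_succ_fst]
    refine ⟨?_, fun hy => Or.inl (Or.inl hy)⟩
    rintro ((hy | ⟨z, hz, hzy⟩) | ⟨z, hz, hzy⟩)
    · exact hy
    all_goals
      have hz0 := (Efin_fst_subset_Icc hc n hz).1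
      simp only at hzy
      nlinarith [hy.2]

lemma isAffineBlock_middle (hc : ∀ n, 0 < c n) (n : ℕ) :
    IsAffineBlock c n (Efin c n).2 (c (n + 1)) where
  slope_pos := hc (n + 1)
  left_mem := Efin_fst_mono n.le_succ (Efin_snd_mem n)
  right_mem := Or.inl (Or.inr ⟨_, Efin_snd_mem n, rfl⟩)
  Ioo_subset := by
    have hr := Efin_snd_pos hc n
    have hcn := hc (n + 1)
    refine Ioo_subset_Ioo hr.le ?_
    rw [Efin_succ_snd]
    nlinarith
  mem_iff y hy := by
    have hr := Efin_snd_pos hc n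
    have hcn := hc (n + 1)
    rw [Efin_succ_fst]
    refine ⟨?_, fun hy => Or.inl (Or.inr ⟨y, hy, rfl⟩)⟩
    rintro ((h | ⟨z, hz, hzy⟩) | ⟨z, hz, hzy⟩)
    · nlinarith [(Efin_fst_subset_Icc hc n h).2, hy.1]
    · simp only [add_right_inj, mul_eq_mul_left_iff, hcn.ne', or_false] at hzy
      exact hzy ▸ hz
    · have hz0 := (Efin_fst_subset_Icc hc n hz).1
      simp only at hzy
      nlinarith [hy.2]

lemma isAffineBlock_right (hc : ∀ n, 0 < c n) (n : ℕ) :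
    IsAffineBlock c n ((Efin c n).2 + c (n + 1) * (Efin c n).2) 1 where
  slope_pos := one_pos
  left_mem := Or.inl (Or.inr ⟨_, Efin_snd_mem n, rfl⟩)
  right_mem := by
    convert Efin_snd_mem (c := c) (n + 1) using 1
    rw [Efin_succ_snd]; ring
  Ioo_subset := by
    have hr := Efin_snd_pos hc n
    have hcn := hc (n + 1)
    refine Ioo_subset_Ioo (by positivity) ?_
    rw [Efin_succ_snd]
    nlinarith
  mem_iff y hy := by
    have hr := Efin_snd_pos hc n
    have hcn := hc (n + 1)
    rw [Efin_succ_fst]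
    refine ⟨?_, fun hy => Or.inr ⟨y, hy, by ring⟩⟩
    rintro ((h | ⟨z, hz, hzy⟩) | ⟨z, hz, hzy⟩)
    · nlinarith [(Efin_fst_subset_Icc hc n h).2, hy.1]
    · have hz1 := (Efin_fst_subset_Icc hc n hz).2
      simp only at hzy
      nlinarith [hy.1]
    · simp only at hzy
      obtain rfl : z = y := by linarith
      exact hz

lemma IsAffineBlock.Xn_succ {n : ℕ} {a b : ℝ} (h : IsAffineBlock c n a b) (hc : ∀ n, 0 < c n)
    {y : ℝ} (hy : y ∈ Ioo 0 (Efin c n).2) : Xn c (n + 1) (a + b * y) = b * Xn c n y := by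
  have hUV : ∀ y ∈ Ioo 0 (Efin c n).2, a + b * y ∈ openGaps c (n + 1) ↔ y ∈ openGaps c n := by
    intro y hy
    have hab : a + b * y ∈ Ioo a (a + b * (Efin c n).2) :=
      ⟨by nlinarith [h.slope_pos, hy.1], by nlinarith [h.slope_pos, hy.2]⟩
    simp only [mem_openGaps_iff hc, h.mem_iff y hy, h.Ioo_subset hab, hy, true_and]
  change (volume (connectedComponentIn (openGaps c (n + 1)) _)).toReal =
    b * (volume (connectedComponentIn (openGaps c n) y)).toReal
  rw [volume_connectedComponentIn_affine h.slope_pos (openGaps_subset_Ioo n)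
    (notMem_openGaps_of_mem_Efin h.left_mem) (notMem_openGaps_of_mem_Efin h.right_mem) hUV hy,
    ENNReal.toReal_mul, ENNReal.toReal_ofReal h.slope_pos.le]

end Gaps

lemma intervalIntegrable_and_integral_of_affine {F G : ℝ → ℝ} {a b k r : ℝ} (hb : 0 < b)
    (hr : 0 ≤ r) (hG : IntervalIntegrable G volume 0 r)
    (hFG : ∀ y ∈ Ioo 0 r, F (a + b * y) = k * G y) :
    IntervalIntegrable F volume a (a + b * r) ∧
      ∫ x in a..a + b * r, F x = b * k * ∫ y in 0..r, G y := by
  constructor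
  · have h := ((hG.const_mul k).comp_mul_left (c := b⁻¹)).comp_sub_right a
    rw [zero_div, zero_add, div_inv_eq_mul, add_comm, mul_comm] at h
    refine h.congr_uIoo fun x hx => ?_
    rw [uIoo_of_le (by nlinarith)] at hx
    have hy : b⁻¹ * (x - a) ∈ Ioo 0 r := by
      rw [← div_eq_inv_mul]
      exact ⟨div_pos (by linarith [hx.1]) hb, (div_lt_iff₀ hb).2 (by linarith [hx.2])⟩
    change k * G _ = F x
    rw [← hFG _ hy]
    congr 1
    field_simp
    ring
  · have h := intervalIntegral.integral_comp_add_mul F hb.ne' a (a := 0) (b := r)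
    rw [mul_zero, add_zero, intervalIntegral.integral_congr_Ioo_of_le hr hFG,
      intervalIntegral.integral_const_mul, smul_eq_mul] at h
    rw [mul_assoc, h, mul_inv_cancel_left₀ hb.ne']

section Moments

variable {c : ℕ → ℝ}

lemma Xn_nonneg {n : ℕ} {ω : ℝ} : 0 ≤ Xn c n ω := ENNReal.toReal_nonneg

lemma Xn_zero (hc : ∀ n, 0 < c n) {y : ℝ} (hy : y ∈ Ioo 0 1) : Xn c 0 y = 1 := by
  have hU : openGaps c 0 = Ioo 0 1 := by
    ext x
    rw [mem_openGaps_iff hc]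
    simp only [Efin, mem_insert_iff, mem_singleton_iff, and_iff_left_iff_imp]
    rintro hx (rfl | rfl) <;> simp at hx
  change (volume (connectedComponentIn (openGaps c 0) y)).toReal = 1
  rw [hU, isPreconnected_Ioo.connectedComponentIn hy, Real.volume_Ioo]
  norm_num

lemma IsAffineBlock.integral_Xn_succ_rpow {θ : ℝ} {n : ℕ} {a b : ℝ} (h : IsAffineBlock c n a b)
    (hc : ∀ n, 0 < c n) (hI : IntervalIntegrable (fun x => Xn c n x ^ θ) volume 0 (Efin c n).2) :
    IntervalIntegrable (fun x => Xn c (n + 1) x ^ θ) volume a (a + b * (Efin c n).2) ∧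
      ∫ x in a..a + b * (Efin c n).2, Xn c (n + 1) x ^ θ =
        b ^ (1 + θ) * ∫ x in 0..(Efin c n).2, Xn c n x ^ θ := by
  have hb := h.slope_pos
  rw [Real.rpow_add hb, Real.rpow_one]
  exact intervalIntegrable_and_integral_of_affine hb (Efin_snd_pos hc n).le hI fun y hy => by
    rw [h.Xn_succ hc hy, Real.mul_rpow hb.le Xn_nonneg]

theorem intervalIntegrable_and_integral_Xn_rpow (hc : ∀ n, 0 < c n) (θ : ℝ) (n : ℕ) :
    IntervalIntegrable (fun x => Xn c n x ^ θ) volume 0 (Efin c n).2 ∧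
      ∫ x in 0..(Efin c n).2, Xn c n x ^ θ = ∏ i ∈ Finset.Icc 1 n, (2 + c i ^ (1 + θ)) := by
  induction n with
  | zero =>
    have h := intervalIntegrable_and_integral_of_affine (F := fun x => Xn c 0 x ^ θ) (a := 0)
      one_pos zero_le_one intervalIntegrable_const fun y hy => by
        rw [zero_add, one_mul, Xn_zero hc hy, Real.one_rpow, mul_one]
    simpa [Efin] using h
  | succ n ih =>
    obtain ⟨i₀, e₀⟩ := (isAffineBlock_left hc n).integral_Xn_succ_rpow hc ih.1
    obtain ⟨i₁, e₁⟩ := (isAffineBlock_middle hc n).integral_Xn_succ_rpow hc ih.1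
    obtain ⟨i₂, e₂⟩ := (isAffineBlock_right hc n).integral_Xn_succ_rpow hc ih.1
    simp only [zero_add, one_mul, Real.one_rpow] at i₀ e₀ i₂ e₂
    have hr : (Efin c (n + 1)).2 =
        (Efin c n).2 + c (n + 1) * (Efin c n).2 + (Efin c n).2 := by
      rw [Efin_succ_snd]; ring
    rw [hr, Finset.prod_Icc_succ_top (Nat.le_add_left 1 n), ← ih.2]
    refine ⟨(i₀.trans i₁).trans i₂, ?_⟩
    rw [← intervalIntegral.integral_add_adjacent_intervals (i₀.trans i₁) i₂,
      ← intervalIntegral.integral_add_adjacent_intervals i₀ i₁, e₀, e₁, e₂]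
    ring

end Moments

theorem mean_Xn_mul_mean_Xn_inv {c : ℕ → ℝ} (hc : ∀ n, 0 < c n) (n : ℕ) :
    ((∫ ω in Qn c n, Xn c n ω) / (Efin c n).2) *
        ((∫ ω in Qn c n, (Xn c n ω)⁻¹) / (Efin c n).2) =
      ∏ i ∈ Finset.Icc 1 n, 3 * (2 + c i ^ 2) / (2 + c i) ^ 2 := by
  have h₁ := (intervalIntegrable_and_integral_Xn_rpow hc 1 n).2
  have hinv := (intervalIntegrable_and_integral_Xn_rpow hc (-1) n).2
  simp only [Real.rpow_one, one_add_one_eq_two, Real.rpow_two] at h₁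
  simp only [Real.rpow_neg_one, add_neg_cancel, Real.rpow_zero, two_add_one_eq_three,
    Finset.prod_const, Nat.card_Icc, Nat.add_sub_cancel] at hinv
  have hQ : ∀ f : ℝ → ℝ, ∫ ω in Qn c n, f ω = ∫ ω in 0..(Efin c n).2, f ω := fun f => by
    rw [Qn, integral_Icc_eq_integral_Ioc,
      intervalIntegral.integral_of_le (Efin_snd_pos hc n).le]
  rw [hQ, hQ, h₁, hinv, Efin_snd_eq_prod, Finset.prod_div_distrib, Finset.prod_mul_distrib,
    Finset.prod_pow, Finset.prod_const, Nat.card_Icc, Nat.add_sub_cancel]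
  ring

lemma cseq_pos (n : ℕ) : 0 < cseq n := by
  rcases n.eq_zero_or_pos with rfl | hn
  · simp [cseq]
  · have hn : (1 : ℝ) ≤ n := by exact_mod_cast hn
    have : 1 / (2 * (n : ℝ)) ≤ 1 / 2 := by gcongr; linarith
    simp only [cseq]
    linarith

lemma cseq_factor_eq {i : ℕ} (hi : 1 ≤ i) :
    3 * (2 + cseq i ^ 2) / (2 + cseq i) ^ 2 = 1 + 2 / (36 * (i : ℝ) ^ 2 - 12 * i + 1) := by
  have hi : (1 : ℝ) ≤ i := by exact_mod_cast hi
  have hd : 36 * (i : ℝ) ^ 2 - 12 * i + 1 ≠ 0 := by nlinarith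
  have hc : (2 + cseq i) ^ 2 ≠ 0 := by have := cseq_pos i; positivity
  rw [one_add_div hd, div_eq_div_iff hc hd, cseq]
  field_simp
  ring

lemma cseq_factor_le {i : ℕ} (hi : 1 ≤ i) :
    3 * (2 + cseq i ^ 2) / (2 + cseq i) ^ 2 ≤ Real.exp (2 / 25 * (1 / (i : ℝ) ^ 2)) := by
  rw [cseq_factor_eq hi]
  refine le_trans ?_ (Real.add_one_le_exp _)
  have hi : (1 : ℝ) ≤ i := by exact_mod_cast hi
  have : 25 * (i : ℝ) ^ 2 ≤ 36 * i ^ 2 - 12 * i + 1 := by nlinarith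
  rw [add_comm, div_mul_div_comm, mul_one]
  gcongr

lemma prod_cseq_factor_le (n : ℕ) :
    ∏ i ∈ Finset.Icc 1 n, 3 * (2 + cseq i ^ 2) / (2 + cseq i) ^ 2 ≤ Real.exp (π ^ 2 / 75) :=
  calc ∏ i ∈ Finset.Icc 1 n, 3 * (2 + cseq i ^ 2) / (2 + cseq i) ^ 2
      ≤ ∏ i ∈ Finset.Icc 1 n, Real.exp (2 / 25 * (1 / (i : ℝ) ^ 2)) :=
        Finset.prod_le_prod (fun i _ => by positivity)
          fun i hi => cseq_factor_le (Finset.mem_Icc.1 hi).1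
    _ = Real.exp (2 / 25 * ∑ i ∈ Finset.Icc 1 n, 1 / (i : ℝ) ^ 2) := by
        rw [← Real.exp_sum, Finset.mul_sum]
    _ ≤ Real.exp (2 / 25 * (π ^ 2 / 6)) := by
        gcongr
        exact sum_le_hasSum _ (fun i _ => by positivity) hasSum_zeta_two
    _ = Real.exp (π ^ 2 / 75) := by ring_nf

/-- For `E = E({1 − 1/(2n)})`:
`E[X_{Qₙ}] · E[X_{Qₙ}⁻¹] = ∏_{i=1}^{n} 3(2 + cᵢ²)/(2 + cᵢ)²`, and this product is
bounded by `e^{π²/75}` uniformly in `n`. -/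
theorem stmt19 (n : ℕ) :
    ((∫ ω in Qn cseq n, Xn cseq n ω) / (Efin cseq n).2) *
        ((∫ ω in Qn cseq n, (Xn cseq n ω)⁻¹) / (Efin cseq n).2) =
      (∏ i ∈ Finset.Icc 1 n, 3 * (2 + cseq i ^ 2) / (2 + cseq i) ^ 2) ∧
    (∏ i ∈ Finset.Icc 1 n, 3 * (2 + cseq i ^ 2) / (2 + cseq i) ^ 2) ≤
      Real.exp (π ^ 2 / 75) :=
  ⟨mean_Xn_mul_mean_Xn_inv cseq_pos n, prod_cseq_factor_le n⟩
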